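/- arXiv:2303.05434 — 10 statements merged into one kernel-verified Lean document; each statement's English description precedes it below -/
import Mathlib

section
/- Let (S, μ, η) be a monad on C equipped with a differential combinator transformation ∂, and define λ_A := ⟨S(π₁), S(π₁+π₄)∘∂_{A×A}⟩ : S(A×A) → S(A)×S(A). Then λ is natural in A and is a distributive law of the diagonal endofunctor A ↦ A×A over the monad (S, μ, η); that is, λ_A∘η_{A×A} = η_A × η_A and λ_A∘μ_{A×A} = (μ_A × μ_A)∘λ_{S(A)}∘S(λ_A). -/
/-!
The first component of `λ` is `S(π₁)`, so it commutes with `η` and `μ` by their naturality.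
For the second, [DC.3] turns `∂ ∘ η` into `η ∘ ⟨0, 1⟩`, which `π₁ + π₄` sends to `η ∘ π₂`.
[DC.4] writes `∂ ∘ μ` as `μ ∘ S(S⟨1, 0⟩ ∘ π₁ + ∂ ∘ π₂) ∘ ∂`; after `S(π₁ + π₄)` the two summands
become the two components of `λ`, and naturality of `∂` at `λ` gives the multiplication law.
-/

open CategoryTheory CategoryTheory.Limits

universe v u

variable {C : Type u} [Category.{v} C] [Preadditive C] [HasBinaryBiproducts C]

/-- A differential combinator transformation on a monad `S`. -/
structure DiffCombTrans (S : Monad C) where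
  d : ∀ A : C, S.obj A ⟶ S.obj (A ⊞ A)
  natural : ∀ {A B : C} (f : A ⟶ B), S.map f ≫ d B = d A ≫ S.map (biprod.map f f)
  dc1 : ∀ A : C, d A ≫ S.map biprod.fst = 0
  dc2 : ∀ A : C,
    d A ≫ S.map (biprod.lift biprod.fst (biprod.lift biprod.snd biprod.snd)) =
      d A ≫ S.map (biprod.lift biprod.fst (biprod.lift biprod.snd 0)) +
      d A ≫ S.map (biprod.lift biprod.fst (biprod.lift 0 biprod.snd))
  dc3 : ∀ A : C, S.η.app A ≫ d A = biprod.lift 0 (𝟙 A) ≫ S.η.app (A ⊞ A)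
  dc4 : ∀ A : C, S.μ.app A ≫ d A =
    d (S.obj A) ≫
      S.map (biprod.fst ≫ S.map (biprod.lift (𝟙 A) 0) + biprod.snd ≫ d A) ≫
      S.μ.app (A ⊞ A)
  dc5 : ∀ A : C, d A ≫ d (A ⊞ A) ≫
      S.map (biprod.lift (biprod.fst ≫ biprod.fst) (biprod.snd ≫ biprod.snd)) = d A
  dc6 : ∀ A : C, d A ≫ d (A ⊞ A) ≫
      S.map (biprod.lift
        (biprod.lift (biprod.fst ≫ biprod.fst) (biprod.snd ≫ biprod.fst))
        (biprod.lift (biprod.fst ≫ biprod.snd) (biprod.snd ≫ biprod.snd))) =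
      d A ≫ d (A ⊞ A)

/-- `λ_A := ⟨S(π₁), S(π₁+π₄) ∘ ∂_{A×A}⟩ : S(A×A) ⟶ S(A) × S(A)`. -/
noncomputable def lamOf (S : Monad C) (p : DiffCombTrans S) (A : C) :
    S.obj (A ⊞ A) ⟶ S.obj A ⊞ S.obj A :=
  biprod.lift (S.map biprod.fst)
    (p.d (A ⊞ A) ≫ S.map (biprod.fst ≫ biprod.fst + biprod.snd ≫ biprod.snd))

namespace DiffCombTrans

variable {S : Monad C} (p : DiffCombTrans S)

@[simp]
lemma lamOf_fst (A : C) : lamOf S p A ≫ biprod.fst = S.map biprod.fst :=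
  biprod.lift_fst _ _

@[simp]
lemma lamOf_snd (A : C) :
    lamOf S p A ≫ biprod.snd =
      p.d (A ⊞ A) ≫ S.map (biprod.fst ≫ biprod.fst + biprod.snd ≫ biprod.snd) :=
  biprod.lift_snd _ _

lemma lamOf_naturality {A B : C} (f : A ⟶ B) :
    S.map (biprod.map f f) ≫ lamOf S p B = lamOf S p A ≫ biprod.map (S.map f) (S.map f) := by
  apply biprod.hom_ext
  · simp only [Category.assoc, lamOf_fst, biprod.map_fst, reassoc_of% p.lamOf_fst, ← S.map_comp]
  · simp only [Category.assoc, lamOf_snd, biprod.map_snd, reassoc_of% p.lamOf_snd,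
      reassoc_of% (p.natural (biprod.map f f)), ← S.map_comp]
    congr 2
    simp [Preadditive.comp_add, Preadditive.add_comp]

lemma unit_comp_lamOf (A : C) :
    S.η.app (A ⊞ A) ≫ lamOf S p A = biprod.map (S.η.app A) (S.η.app A) := by
  apply biprod.hom_ext
  · simpa using (S.η.naturality (biprod.fst : A ⊞ A ⟶ A)).symm
  · simp only [Category.assoc, lamOf_snd, biprod.map_snd, reassoc_of% (p.dc3 (A ⊞ A))]
    rw [← S.η.naturality]
    simp [Preadditive.comp_add]

lemma dc4_summands_comp_sum (A : C) :
    (biprod.fst ≫ S.map (biprod.lift (𝟙 (A ⊞ A)) 0) + biprod.snd ≫ p.d (A ⊞ A)) ≫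
        S.map (biprod.fst ≫ biprod.fst + biprod.snd ≫ biprod.snd) =
      biprod.map (lamOf S p A) (lamOf S p A) ≫
        (biprod.fst ≫ biprod.fst + biprod.snd ≫ biprod.snd) := by
  simp [Preadditive.comp_add, Preadditive.add_comp, ← S.map_comp]

lemma mul_comp_lamOf (A : C) :
    S.μ.app (A ⊞ A) ≫ lamOf S p A =
      S.map (lamOf S p A) ≫ lamOf S p (S.obj A) ≫ biprod.map (S.μ.app A) (S.μ.app A) := by
  apply biprod.hom_ext
  · simp only [Category.assoc, lamOf_fst, biprod.map_fst, reassoc_of% p.lamOf_fst]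
    rw [← S.μ.naturality, ← S.map_comp_assoc, lamOf_fst, Functor.comp_map]
  · simp only [Category.assoc, lamOf_snd, biprod.map_snd, reassoc_of% p.lamOf_snd,
      reassoc_of% (p.dc4 (A ⊞ A))]
    rw [← S.μ.naturality, reassoc_of% (p.natural (lamOf S p A))]
    simp only [Functor.comp_map, ← S.map_comp_assoc, dc4_summands_comp_sum]

end DiffCombTrans

/-- `λ` is natural and is a distributive law of the diagonal functor over the monad. -/
theorem lamOf_natural_and_distributive (S : Monad C) (p : DiffCombTrans S) :
    (∀ {A B : C} (f : A ⟶ B),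
        S.map (biprod.map f f) ≫ lamOf S p B =
          lamOf S p A ≫ biprod.map (S.map f) (S.map f)) ∧
    (∀ A : C, S.η.app (A ⊞ A) ≫ lamOf S p A = biprod.map (S.η.app A) (S.η.app A)) ∧
    (∀ A : C, S.μ.app (A ⊞ A) ≫ lamOf S p A =
        S.map (lamOf S p A) ≫ lamOf S p (S.obj A) ≫
          biprod.map (S.μ.app A) (S.μ.app A)) :=
  ⟨p.lamOf_naturality, p.unit_comp_lamOf, p.mul_comp_lamOf⟩
end

section
/- Let (S, μ, η) be a monad on C equipped with a differential combinator transformation ∂, and define λ_A := ⟨S(π₁), S(π₁+π₄)∘∂_{A×A}⟩ : S(A×A) → S(A)×S(A). Then λ is compatible with the zero map of the biproduct tangent structure: λ_A∘S(⟨1_A,0⟩) = ⟨1_{S(A)},0⟩ as morphisms S(A) → S(A)×S(A). -/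
open CategoryTheory CategoryTheory.Limits

universe v u

variable {C : Type u} [Category.{v} C] [Preadditive C] [HasBinaryBiproducts C]

theorem CategoryTheory.Limits.biprod.lift_id_zero (A : C) :
    biprod.lift (𝟙 A) (0 : A ⟶ A) = biprod.inl :=
  biprod.hom_ext _ _ (by simp) (by simp)

theorem CategoryTheory.Limits.biprod.map_inl_comp_fst_fst_add_snd_snd (A : C) :
    biprod.map (biprod.inl : A ⟶ A ⊞ A) biprod.inl ≫
        (biprod.fst ≫ biprod.fst + biprod.snd ≫ biprod.snd) = (biprod.fst : A ⊞ A ⟶ A) := by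
  simp [Preadditive.comp_add]

/- Naturality of `∂` along `ι₁ = ⟨1, 0⟩` turns `S(π₁ + π₄) ∘ ∂ ∘ S(ι₁)` into `S(π₁) ∘ ∂`,
which vanishes by [DC.1]. -/
theorem DiffCombTrans.map_inl_comp_d_comp_map_fst_fst_add_snd_snd {S : Monad C}
    (p : DiffCombTrans S) (A : C) :
    S.map biprod.inl ≫ p.d (A ⊞ A) ≫ S.map (biprod.fst ≫ biprod.fst + biprod.snd ≫ biprod.snd) =
      0 := by
  rw [← Category.assoc, p.natural, Category.assoc, ← S.map_comp,
    biprod.map_inl_comp_fst_fst_add_snd_snd, p.dc1]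

/-- `λ` is compatible with the zero map of the biproduct tangent structure:
`λ_A ∘ S(⟨1_A,0⟩) = ⟨1_{S(A)},0⟩`. -/
theorem lamOf_zero (S : Monad C) (p : DiffCombTrans S) (A : C) :
    S.map (biprod.lift (𝟙 A) 0) ≫ lamOf S p A = biprod.lift (𝟙 (S.obj A)) 0 := by
  rw [biprod.lift_id_zero]
  apply biprod.hom_ext
  · simp [lamOf, ← S.map_comp]
  · simpa [lamOf] using p.map_inl_comp_d_comp_map_fst_fst_add_snd_snd A
end

section
/- Let (S, μ, η) be a monad on C equipped with a differential combinator transformation ∂, and define λ_A := ⟨S(π₁), S(π₁+π₄)∘∂_{A×A}⟩ : S(A×A) → S(A)×S(A). Then λ is compatible with the sum of the biproduct tangent structure: λ_A∘S(⟨π₁, π₂+π₃⟩) = ⟨S(π₁), π₂∘λ_A∘S(⟨π₁,π₂⟩) + π₂∘λ_A∘S(⟨π₁,π₃⟩)⟩ as morphisms S(A×A×A) → S(A)×S(A). -/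
open CategoryTheory CategoryTheory.Limits

universe v u

variable {C : Type u} [Category.{v} C] [Preadditive C] [HasBinaryBiproducts C]

lemma key (S : Monad C) (p : DiffCombTrans S) {X A : C} (f : X ⟶ A ⊞ A) :
    S.map f ≫ p.d (A ⊞ A) ≫ S.map (biprod.fst ≫ biprod.fst + biprod.snd ≫ biprod.snd)
      = p.d X ≫ S.map (biprod.fst ≫ f ≫ biprod.fst + biprod.snd ≫ f ≫ biprod.snd) := by
  rw [← Category.assoc, p.natural, Category.assoc, ← S.map_comp]
  congr 2
  simp [Preadditive.comp_add]

/-- `λ` is compatible with the sum of the biproduct tangent structure. -/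
theorem lamOf_sum (S : Monad C) (p : DiffCombTrans S) (A : C) :
    S.map (biprod.lift biprod.fst
        (biprod.snd ≫ biprod.fst + biprod.snd ≫ biprod.snd)) ≫ lamOf S p A =
      biprod.lift (S.map biprod.fst)
        (S.map (biprod.lift biprod.fst (biprod.snd ≫ biprod.fst)) ≫ lamOf S p A ≫ biprod.snd +
          S.map (biprod.lift biprod.fst (biprod.snd ≫ biprod.snd)) ≫ lamOf S p A ≫ biprod.snd) := by
  set X := A ⊞ (A ⊞ A)
  apply biprod.hom_ext
  · simp [lamOf, ← S.map_comp]
  · simp only [lamOf, biprod.lift_snd, Category.assoc]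
    rw [key S p, key S p, key S p]
    set h : (X ⊞ (X ⊞ X)) ⟶ A :=
      biprod.fst ≫ biprod.fst + biprod.snd ≫ biprod.fst ≫ biprod.snd ≫ biprod.fst
        + biprod.snd ≫ biprod.snd ≫ biprod.snd ≫ biprod.snd with hh
    have e0 : (biprod.fst ≫ (biprod.lift biprod.fst
          (biprod.snd ≫ biprod.fst + biprod.snd ≫ biprod.snd) : X ⟶ A ⊞ A) ≫ biprod.fst +
        biprod.snd ≫ (biprod.lift biprod.fst
          (biprod.snd ≫ biprod.fst + biprod.snd ≫ biprod.snd) : X ⟶ A ⊞ A) ≫ biprod.snd)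
        = (biprod.lift biprod.fst (biprod.lift biprod.snd biprod.snd) : X ⊞ X ⟶ X ⊞ (X ⊞ X)) ≫ h := by
      simp +zetaDelta [hh, Preadditive.comp_add]; try abel
    have e1 : (biprod.fst ≫ (biprod.lift biprod.fst
          (biprod.snd ≫ biprod.fst) : X ⟶ A ⊞ A) ≫ biprod.fst +
        biprod.snd ≫ (biprod.lift biprod.fst
          (biprod.snd ≫ biprod.fst) : X ⟶ A ⊞ A) ≫ biprod.snd)
        = (biprod.lift biprod.fst (biprod.lift biprod.snd 0) : X ⊞ X ⟶ X ⊞ (X ⊞ X)) ≫ h := by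
      simp +zetaDelta [hh, Preadditive.comp_add]; try abel
    have e2 : (biprod.fst ≫ (biprod.lift biprod.fst
          (biprod.snd ≫ biprod.snd) : X ⟶ A ⊞ A) ≫ biprod.fst +
        biprod.snd ≫ (biprod.lift biprod.fst
          (biprod.snd ≫ biprod.snd) : X ⟶ A ⊞ A) ≫ biprod.snd)
        = (biprod.lift biprod.fst (biprod.lift 0 biprod.snd) : X ⊞ X ⟶ X ⊞ (X ⊞ X)) ≫ h := by
      simp +zetaDelta [hh, Preadditive.comp_add]; try abel
    rw [e0, e1, e2, S.map_comp, S.map_comp, S.map_comp, ← Category.assoc, ← Category.assoc,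
      ← Category.assoc, p.dc2, Preadditive.add_comp]
end

section
/- Let (S, μ, η) be a monad on C equipped with a differential combinator transformation ∂, and define λ_A := ⟨S(π₁), S(π₁+π₄)∘∂_{A×A}⟩ : S(A×A) → S(A)×S(A). Then λ is compatible with the canonical flip of the biproduct tangent structure: ⟨π₁,π₃,π₂,π₄⟩∘(λ_A × λ_A)∘λ_{A×A} = (λ_A × λ_A)∘λ_{A×A}∘S(⟨π₁,π₃,π₂,π₄⟩) as morphisms S((A×A)×(A×A)) → (S(A)×S(A))×(S(A)×S(A)), where ⟨π₁,π₃,π₂,π₄⟩ denotes the transposition of the second and third coordinates of a fourfold biproduct. -/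
open CategoryTheory CategoryTheory.Limits

universe v u

variable {C : Type u} [Category.{v} C] [Preadditive C] [HasBinaryBiproducts C]

/-- the canonical flip `⟨π₁,π₃,π₂,π₄⟩ : (X × X) × (X × X) ⟶ (X × X) × (X × X)`. -/
noncomputable def canFlip (X : C) : (X ⊞ X) ⊞ (X ⊞ X) ⟶ (X ⊞ X) ⊞ (X ⊞ X) :=
  biprod.lift (biprod.lift (biprod.fst ≫ biprod.fst) (biprod.snd ≫ biprod.fst))
    (biprod.lift (biprod.fst ≫ biprod.snd) (biprod.snd ≫ biprod.snd))

/-! Compare the two sides componentwise. The component `S(π₁π₁)` is untouched by the flip,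
and the two mixed components `∂ ; S(…)` are exchanged by it, by naturality of `∂`. The last
component is `∂∂` followed by `S` of a linear map; moving the flip through it, by naturality,
turns it into the flip `⟨π₁,π₃,π₂,π₄⟩` of the second derivative, which [DC.6] absorbs. -/

noncomputable def outerSum (X : C) : (X ⊞ X) ⊞ (X ⊞ X) ⟶ X :=
  biprod.fst ≫ biprod.fst + biprod.snd ≫ biprod.snd

section canFlip

variable (X : C)

@[simp]
lemma canFlip_fst_fst : canFlip X ≫ biprod.fst ≫ biprod.fst = biprod.fst ≫ biprod.fst := by
  simp [canFlip]

@[simp]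
lemma canFlip_fst_snd : canFlip X ≫ biprod.fst ≫ biprod.snd = biprod.snd ≫ biprod.fst := by
  simp [canFlip]

@[simp]
lemma canFlip_snd_fst : canFlip X ≫ biprod.snd ≫ biprod.fst = biprod.fst ≫ biprod.snd := by
  simp [canFlip]

@[simp]
lemma canFlip_snd_snd : canFlip X ≫ biprod.snd ≫ biprod.snd = biprod.snd ≫ biprod.snd := by
  simp [canFlip]

end canFlip

namespace DiffCombTrans

variable {S : Monad C} (p : DiffCombTrans S)

lemma map_d_map {X Y Z : C} (f : X ⟶ Y) (g : Y ⊞ Y ⟶ Z) :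
    S.map f ≫ p.d Y ≫ S.map g = p.d X ≫ S.map (biprod.map f f ≫ g) := by
  rw [← Category.assoc, p.natural, Category.assoc, ← S.map_comp]

lemma map_d_d_map {X Y Z : C} (f : X ⟶ Y) (g : (Y ⊞ Y) ⊞ (Y ⊞ Y) ⟶ Z) :
    S.map f ≫ p.d Y ≫ p.d (Y ⊞ Y) ≫ S.map g =
      p.d X ≫ p.d (X ⊞ X) ≫ S.map (biprod.map (biprod.map f f) (biprod.map f f) ≫ g) := by
  rw [← Category.assoc, p.natural, Category.assoc, map_d_map]

lemma d_d_map_canFlip_comp {X Z : C} (g : (X ⊞ X) ⊞ (X ⊞ X) ⟶ Z) :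
    p.d X ≫ p.d (X ⊞ X) ≫ S.map (canFlip X ≫ g) = p.d X ≫ p.d (X ⊞ X) ≫ S.map g := by
  have dc6 : p.d X ≫ p.d (X ⊞ X) ≫ S.map (canFlip X) = p.d X ≫ p.d (X ⊞ X) := p.dc6 X
  rw [S.map_comp]
  simpa only [Category.assoc] using dc6 =≫ S.map g

end DiffCombTrans

lemma lamOf_eq (S : Monad C) (p : DiffCombTrans S) (A : C) :
    lamOf S p A = biprod.lift (S.map biprod.fst) (p.d (A ⊞ A) ≫ S.map (outerSum A)) := rfl

lemma map_canFlip_map_fst_outerSum (A : C) :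
    biprod.map (canFlip A) (canFlip A) ≫ biprod.map biprod.fst biprod.fst ≫ outerSum A =
      outerSum (A ⊞ A) ≫ biprod.fst := by
  ext <;> simp [outerSum, canFlip]

lemma map_canFlip_outerSum_fst (A : C) :
    biprod.map (canFlip A) (canFlip A) ≫ outerSum (A ⊞ A) ≫ biprod.fst =
      biprod.map biprod.fst biprod.fst ≫ outerSum A := by
  ext <;> simp [outerSum, canFlip]

lemma map_map_canFlip_outerSum_outerSum (A : C) :
    biprod.map (biprod.map (canFlip A) (canFlip A)) (biprod.map (canFlip A) (canFlip A)) ≫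
        biprod.map (outerSum (A ⊞ A)) (outerSum (A ⊞ A)) ≫ outerSum A =
      canFlip ((A ⊞ A) ⊞ (A ⊞ A)) ≫
        biprod.map (outerSum (A ⊞ A)) (outerSum (A ⊞ A)) ≫ outerSum A := by
  ext <;> simp [outerSum, canFlip]

/-- `λ` is compatible with the canonical flip of the biproduct tangent structure:
`⟨π₁,π₃,π₂,π₄⟩ ∘ (λ_A × λ_A) ∘ λ_{A×A} = (λ_A × λ_A) ∘ λ_{A×A} ∘ S(⟨π₁,π₃,π₂,π₄⟩)`. -/
theorem lamOf_canFlip (S : Monad C) (p : DiffCombTrans S) (A : C) :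
    lamOf S p (A ⊞ A) ≫ biprod.map (lamOf S p A) (lamOf S p A) ≫ canFlip (S.obj A) =
      S.map (canFlip A) ≫ lamOf S p (A ⊞ A) ≫
        biprod.map (lamOf S p A) (lamOf S p A) := by
  apply biprod.hom_ext <;> apply biprod.hom_ext <;>
    simp only [lamOf_eq, Category.assoc, canFlip_fst_fst, canFlip_fst_snd, canFlip_snd_fst,
      canFlip_snd_snd, biprod.map_fst_assoc, biprod.map_snd_assoc, biprod.map_fst,
      biprod.map_snd, biprod.lift_fst_assoc, biprod.lift_snd_assoc, biprod.lift_fst,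
      biprod.lift_snd]
  · rw [← S.map_comp, ← S.map_comp, canFlip_fst_fst]
  · rw [← S.map_comp, p.map_d_map, p.map_d_map, map_canFlip_map_fst_outerSum]
  · rw [p.map_d_map, ← S.map_comp, p.map_d_map, map_canFlip_outerSum_fst]
  · rw [p.map_d_map (outerSum _), p.map_d_d_map, map_map_canFlip_outerSum_outerSum,
      p.d_d_map_canFlip_comp]
end

section
/- Let (S, μ, η) be a monad on C equipped with a differential combinator transformation ∂. Then S(⟨π₁,0⟩)∘∂_A = 0 as morphisms S(A) → S(A×A); this follows from axioms [DC.1] and [DC.2] alone. -/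
open CategoryTheory CategoryTheory.Limits

universe v u

variable {C : Type u} [Category.{v} C] [Preadditive C] [HasBinaryBiproducts C]

/-! Forgetting the third coordinate, i.e. applying `S(1 × π₁)`, turns [DC.2] into
`∂_A = ∂_A + S(⟨π₁,0⟩) ∘ ∂_A`; cancel `∂_A`. -/

namespace CategoryTheory.Limits.biprod

theorem lift_fst_snd (X Y : C) : biprod.lift biprod.fst biprod.snd = 𝟙 (X ⊞ Y) := by
  ext <;> simp

theorem lift_lift_comp_map_id_fst {X A B D : C} (f : X ⟶ A) (g : X ⟶ B) (h : X ⟶ D) :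
    biprod.lift f (biprod.lift g h) ≫ biprod.map (𝟙 A) biprod.fst = biprod.lift f g := by
  ext <;> simp

end CategoryTheory.Limits.biprod

/-- `S(⟨π₁,0⟩) ∘ ∂_A = 0`. -/
theorem diffCombTrans_fst_zero (S : Monad C) (p : DiffCombTrans S) (A : C) :
    p.d A ≫ S.map (biprod.lift biprod.fst (0 : A ⊞ A ⟶ A)) = 0 := by
  have h := congrArg (· ≫ S.map (biprod.map (𝟙 A) (biprod.fst : A ⊞ A ⟶ A))) (p.dc2 A)
  simp only [Preadditive.add_comp, Category.assoc, ← Functor.map_comp,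
    biprod.lift_lift_comp_map_id_fst, biprod.lift_fst_snd] at h
  exact add_eq_left.mp h.symm
end

section
/- Let (S, μ, η) be a monad on C equipped with a differential combinator transformation ∂. Then the differential combinator transformation is automatically compatible with negatives: [DC.N] S(⟨π₁, −π₂⟩)∘∂_A = −∂_A as morphisms S(A) → S(A×A). -/
open CategoryTheory CategoryTheory.Limits

universe v u

variable {C : Type u} [Category.{v} C] [Preadditive C] [HasBinaryBiproducts C]

/-! Precomposing with `∂_A` and rescaling the tangent coordinate is additive in the rescaling by
[DC.2], hence a group homomorphism `Hom(A, B) → Hom(S A, S (B × B))`; [DC.N] is its value at `-1`. -/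

namespace DiffCombTrans

variable {S : Monad C} (p : DiffCombTrans S)

theorem d_map_biprod_map_add {A B : C} (h f g : A ⟶ B) :
    p.d A ≫ S.map (biprod.map h (f + g)) =
      p.d A ≫ S.map (biprod.map h f) + p.d A ≫ S.map (biprod.map h g) := by
  have key := congrArg (· ≫ S.map (biprod.map h (biprod.desc f g))) (p.dc2 A)
  simp only [Preadditive.add_comp, Category.assoc, ← S.map_comp] at key
  have hsum : biprod.lift biprod.fst (biprod.lift biprod.snd biprod.snd) ≫
      biprod.map h (biprod.desc f g) = biprod.map h (f + g) := by ext <;> simp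
  have hf : biprod.lift biprod.fst (biprod.lift biprod.snd 0) ≫
      biprod.map h (biprod.desc f g) = biprod.map h f := by ext <;> simp
  have hg : biprod.lift biprod.fst (biprod.lift 0 biprod.snd) ≫
      biprod.map h (biprod.desc f g) = biprod.map h g := by ext <;> simp
  rwa [hsum, hf, hg] at key

noncomputable def mapBiprodMapHom {A B : C} (h : A ⟶ B) :
    (A ⟶ B) →+ (S.obj A ⟶ S.obj (B ⊞ B)) :=
  AddMonoidHom.mk' (fun f => p.d A ≫ S.map (biprod.map h f)) (p.d_map_biprod_map_add h)

end DiffCombTrans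

/-- [DC.N]: `S(⟨π₁, −π₂⟩) ∘ ∂_A = −∂_A`. -/
theorem diffCombTrans_neg (S : Monad C) (p : DiffCombTrans S) (A : C) :
    p.d A ≫ S.map (biprod.lift biprod.fst (-biprod.snd)) = -p.d A := by
  have hneg : biprod.lift biprod.fst (-biprod.snd) = biprod.map (𝟙 A) (-𝟙 A) := by
    ext <;> simp
  have hid : biprod.map (𝟙 A) (𝟙 A) = 𝟙 (A ⊞ A) := by
    ext <;> simp
  have := map_neg (p.mapBiprodMapHom (𝟙 A)) (𝟙 A)
  simpa [DiffCombTrans.mapBiprodMapHom, hneg, hid] using this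
end

section
/- Let (S, μ, η) be a monad on C and let λ be a 𝔹-distributive law for (S, μ, η). Define ∂_A := π₂∘λ_{A×A}∘S(⟨1_A,0,0,1_A⟩) : S(A) → S(A×A), where ⟨1_A,0,0,1_A⟩ = ⟨⟨1_A,0⟩,⟨0,1_A⟩⟩ : A → (A×A)×(A×A). Then ∂ is natural in A and satisfies axioms [DC.1]–[DC.6], i.e. ∂ is a differential combinator transformation on (S, μ, η). -/
open CategoryTheory CategoryTheory.Limits

universe v u

variable {C : Type u} [Category.{v} C] [Preadditive C] [HasBinaryBiproducts C]

/-- the vertical lift `⟨π₁,0,0,π₂⟩ : X × X ⟶ (X × X) × (X × X)`. -/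
noncomputable def vertLift (X : C) : X ⊞ X ⟶ (X ⊞ X) ⊞ (X ⊞ X) :=
  biprod.lift (biprod.lift biprod.fst 0) (biprod.lift 0 biprod.snd)

/-- A `𝔹`-distributive law for a monad `S`. -/
structure BDistLaw (S : Monad C) where
  lam : ∀ A : C, S.obj (A ⊞ A) ⟶ S.obj A ⊞ S.obj A
  natural : ∀ {A B : C} (f : A ⟶ B),
    S.map (biprod.map f f) ≫ lam B = lam A ≫ biprod.map (S.map f) (S.map f)
  comm_mu : ∀ A : C, S.μ.app (A ⊞ A) ≫ lam A =
    S.map (lam A) ≫ lam (S.obj A) ≫ biprod.map (S.μ.app A) (S.μ.app A)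
  comm_eta : ∀ A : C, S.η.app (A ⊞ A) ≫ lam A = biprod.map (S.η.app A) (S.η.app A)
  proj : ∀ A : C, lam A ≫ biprod.fst = S.map biprod.fst
  zero : ∀ A : C, S.map (biprod.lift (𝟙 A) 0) ≫ lam A = biprod.lift (𝟙 (S.obj A)) 0
  sum : ∀ A : C, S.map (biprod.lift biprod.fst
      (biprod.snd ≫ biprod.fst + biprod.snd ≫ biprod.snd)) ≫ lam A =
    biprod.lift (S.map biprod.fst)
      (S.map (biprod.lift biprod.fst (biprod.snd ≫ biprod.fst)) ≫ lam A ≫ biprod.snd +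
        S.map (biprod.lift biprod.fst (biprod.snd ≫ biprod.snd)) ≫ lam A ≫ biprod.snd)
  vlift : ∀ A : C, lam A ≫ vertLift (S.obj A) =
    S.map (vertLift A) ≫ lam (A ⊞ A) ≫ biprod.map (lam A) (lam A)
  cflip : ∀ A : C, lam (A ⊞ A) ≫ biprod.map (lam A) (lam A) ≫ canFlip (S.obj A) =
    S.map (canFlip A) ≫ lam (A ⊞ A) ≫ biprod.map (lam A) (lam A)

/-- `∂_A := π₂ ∘ λ_{A×A} ∘ S(⟨1_A,0,0,1_A⟩) : S(A) ⟶ S(A×A)`. -/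
noncomputable def partialOf (S : Monad C) (l : BDistLaw S) (A : C) :
    S.obj A ⟶ S.obj (A ⊞ A) :=
  S.map (biprod.lift (biprod.lift (𝟙 A) 0) (biprod.lift 0 (𝟙 A))) ≫
    l.lam (A ⊞ A) ≫ biprod.snd

section Aux

variable (S : Monad C) (l : BDistLaw S)

/-- the injection `⟨1,0,0,1⟩`. -/
noncomputable abbrev iotaOf (A : C) : A ⟶ (A ⊞ A) ⊞ (A ⊞ A) :=
  biprod.lift (biprod.lift (𝟙 A) 0) (biprod.lift 0 (𝟙 A))

lemma partialOf_eq (A : C) :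
    partialOf S l A = S.map (iotaOf A) ≫ l.lam (A ⊞ A) ≫ biprod.snd := rfl

lemma lam_snd_natural {A B : C} (f : A ⟶ B) :
    l.lam A ≫ biprod.snd ≫ S.map f = S.map (biprod.map f f) ≫ l.lam B ≫ biprod.snd := by
  rw [reassoc_of% (l.natural f)]
  simp

/-- Key lemma: post-composition of `∂` with `S g`. -/
lemma dpost {A D : C} (g : A ⊞ A ⟶ D) :
    partialOf S l A ≫ S.map g =
      S.map (biprod.lift (biprod.lift (𝟙 A) 0 ≫ g) (biprod.lift 0 (𝟙 A) ≫ g)) ≫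
        l.lam D ≫ biprod.snd := by
  rw [partialOf_eq]
  have h1 : l.lam (A ⊞ A) ≫ biprod.snd ≫ S.map g
      = S.map (biprod.map g g) ≫ l.lam D ≫ biprod.snd := lam_snd_natural S l g
  rw [Category.assoc, Category.assoc, h1, ← Category.assoc, ← Functor.map_comp]
  congr 2
  apply biprod.hom_ext <;> simp [iotaOf]

end Aux

section Ax

variable (S : Monad C) (l : BDistLaw S)

lemma partial_natural {A B : C} (f : A ⟶ B) :
    S.map f ≫ partialOf S l B = partialOf S l A ≫ S.map (biprod.map f f) := by
  have hio : f ≫ iotaOf B =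
      iotaOf A ≫ biprod.map (biprod.map f f) (biprod.map f f) := by
    apply biprod.hom_ext <;> apply biprod.hom_ext <;> simp
  rw [partialOf_eq, partialOf_eq, ← Category.assoc, ← Functor.map_comp, hio,
    Functor.map_comp, Category.assoc, ← lam_snd_natural]
  simp

lemma partial_dc1 (A : C) : partialOf S l A ≫ S.map biprod.fst = 0 := by
  rw [dpost]
  have : biprod.lift (biprod.lift (𝟙 A) 0 ≫ (biprod.fst : A ⊞ A ⟶ A))
      (biprod.lift 0 (𝟙 A) ≫ (biprod.fst : A ⊞ A ⟶ A)) = biprod.lift (𝟙 A) 0 := by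
    apply biprod.hom_ext <;> simp
  rw [this, reassoc_of% (l.zero A)]
  simp

lemma partial_dc3 (A : C) :
    S.η.app A ≫ partialOf S l A = biprod.lift 0 (𝟙 A) ≫ S.η.app (A ⊞ A) := by
  rw [partialOf_eq]
  have h := S.η.naturality (iotaOf A)
  simp only [Functor.id_map] at h
  rw [← Category.assoc, ← h, Category.assoc, reassoc_of% (l.comm_eta (A ⊞ A))]
  simp only [biprod.map_snd]
  rw [← Category.assoc]
  congr 1
  apply biprod.hom_ext <;> simp [iotaOf]

end Ax

section Ax2

variable (S : Monad C) (l : BDistLaw S)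

lemma partial_dc2 (A : C) :
    partialOf S l A ≫ S.map (biprod.lift biprod.fst (biprod.lift biprod.snd biprod.snd)) =
      partialOf S l A ≫ S.map (biprod.lift biprod.fst (biprod.lift biprod.snd 0)) +
      partialOf S l A ≫ S.map (biprod.lift biprod.fst (biprod.lift 0 biprod.snd)) := by
  set D := A ⊞ (A ⊞ A) with hD
  set t : A ⟶ D ⊞ (D ⊞ D) :=
    biprod.lift (biprod.lift (𝟙 A) 0)
      (biprod.lift (biprod.lift 0 (biprod.lift (𝟙 A) 0))
        (biprod.lift 0 (biprod.lift 0 (𝟙 A)))) with ht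
  have h1 : t ≫ biprod.lift biprod.fst (biprod.snd ≫ biprod.fst + biprod.snd ≫ biprod.snd) =
      biprod.lift
        (biprod.lift (𝟙 A) 0 ≫ biprod.lift biprod.fst (biprod.lift biprod.snd biprod.snd))
        (biprod.lift 0 (𝟙 A) ≫ biprod.lift biprod.fst (biprod.lift biprod.snd biprod.snd)) := by
    repeat' apply biprod.hom_ext
    all_goals simp [ht, D, Preadditive.comp_add, Preadditive.add_comp]
  have h2 : t ≫ biprod.lift biprod.fst (biprod.snd ≫ biprod.fst) =
      biprod.lift
        (biprod.lift (𝟙 A) 0 ≫ biprod.lift biprod.fst (biprod.lift biprod.snd 0))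
        (biprod.lift 0 (𝟙 A) ≫ biprod.lift biprod.fst (biprod.lift biprod.snd 0)) := by
    repeat' apply biprod.hom_ext
    all_goals simp [ht, D, Preadditive.comp_add, Preadditive.add_comp]
  have h3 : t ≫ biprod.lift biprod.fst (biprod.snd ≫ biprod.snd) =
      biprod.lift
        (biprod.lift (𝟙 A) 0 ≫ biprod.lift biprod.fst (biprod.lift 0 biprod.snd))
        (biprod.lift 0 (𝟙 A) ≫ biprod.lift biprod.fst (biprod.lift 0 biprod.snd)) := by
    repeat' apply biprod.hom_ext
    all_goals simp [ht, D, Preadditive.comp_add, Preadditive.add_comp]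
  rw [dpost, dpost, dpost, ← h1, ← h2, ← h3, Functor.map_comp, Functor.map_comp,
    Functor.map_comp, Category.assoc, Category.assoc, Category.assoc,
    reassoc_of% (l.sum D)]
  rw [biprod.lift_snd, Preadditive.comp_add]

end Ax2

section Ax4

variable (S : Monad C) (l : BDistLaw S)

lemma iota_lam (A : C) : S.map (iotaOf A) ≫ l.lam (A ⊞ A) =
    biprod.lift (S.map (biprod.lift (𝟙 A) 0)) (partialOf S l A) := by
  apply biprod.hom_ext
  · rw [Category.assoc, l.proj, ← Functor.map_comp, biprod.lift_fst, biprod.lift_fst]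
  · rw [Category.assoc, biprod.lift_snd, partialOf_eq]

lemma partial_dc4 (A : C) :
    S.μ.app A ≫ partialOf S l A =
      partialOf S l (S.obj A) ≫
        S.map (biprod.fst ≫ S.map (biprod.lift (𝟙 A) 0) + biprod.snd ≫ partialOf S l A) ≫
        S.μ.app (A ⊞ A) := by
  have hμ := S.μ.naturality (iotaOf A)
  have hL : S.μ.app A ≫ partialOf S l A =
      S.map (S.map (iotaOf A) ≫ l.lam (A ⊞ A)) ≫ l.lam (S.obj (A ⊞ A)) ≫
        biprod.snd ≫ S.μ.app (A ⊞ A) := by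
    conv_lhs => rw [partialOf_eq]
    rw [← Category.assoc, ← hμ]
    simp only [Functor.comp_map, Category.assoc]
    rw [reassoc_of% (l.comm_mu (A ⊞ A))]
    simp only [Functor.map_comp, Category.assoc, biprod.map_snd]
  have harg : biprod.lift
        (biprod.lift (𝟙 (S.obj A)) 0 ≫
          (biprod.fst ≫ S.map (biprod.lift (𝟙 A) 0) + biprod.snd ≫ partialOf S l A))
        (biprod.lift 0 (𝟙 (S.obj A)) ≫
          (biprod.fst ≫ S.map (biprod.lift (𝟙 A) 0) + biprod.snd ≫ partialOf S l A)) =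
      biprod.lift (S.map (biprod.lift (𝟙 A) 0)) (partialOf S l A) := by
    apply biprod.hom_ext <;> simp [Preadditive.comp_add]
  have hR : partialOf S l (S.obj A) ≫
        S.map (biprod.fst ≫ S.map (biprod.lift (𝟙 A) 0) + biprod.snd ≫ partialOf S l A) ≫
        S.μ.app (A ⊞ A) =
      S.map (biprod.lift (S.map (biprod.lift (𝟙 A) 0)) (partialOf S l A)) ≫
        l.lam (S.obj (A ⊞ A)) ≫ biprod.snd ≫ S.μ.app (A ⊞ A) := by
    rw [← Category.assoc, dpost, harg]
    simp only [Category.assoc]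
  rw [hL, hR, iota_lam]

end Ax4

section Ax5

variable (S : Monad C) (l : BDistLaw S)

lemma partial_dc5 (A : C) :
    partialOf S l A ≫ partialOf S l (A ⊞ A) ≫
      S.map (biprod.lift (biprod.fst ≫ biprod.fst) (biprod.snd ≫ biprod.snd)) =
    partialOf S l A := by
  have h1 : partialOf S l (A ⊞ A) ≫
      S.map (biprod.lift (biprod.fst ≫ biprod.fst) (biprod.snd ≫ biprod.snd)) =
      S.map (vertLift A) ≫ l.lam (A ⊞ A) ≫ biprod.snd := by
    rw [dpost]
    have harg : biprod.lift
        ((biprod.lift (𝟙 (A ⊞ A)) 0 : A ⊞ A ⟶ (A ⊞ A) ⊞ (A ⊞ A)) ≫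
          biprod.lift (biprod.fst ≫ biprod.fst) (biprod.snd ≫ biprod.snd))
        ((biprod.lift 0 (𝟙 (A ⊞ A)) : A ⊞ A ⟶ (A ⊞ A) ⊞ (A ⊞ A)) ≫
          biprod.lift (biprod.fst ≫ biprod.fst) (biprod.snd ≫ biprod.snd)) = vertLift A := by
      repeat' apply biprod.hom_ext
      all_goals simp [vertLift]
    rw [harg]
  have h2 : partialOf S l A ≫ S.map (vertLift A) =
      S.map (iotaOf A ≫ vertLift (A ⊞ A)) ≫ l.lam ((A ⊞ A) ⊞ (A ⊞ A)) ≫ biprod.snd := by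
    rw [dpost]
    have harg : biprod.lift (biprod.lift (𝟙 A) 0 ≫ vertLift A)
        (biprod.lift 0 (𝟙 A) ≫ vertLift A) = iotaOf A ≫ vertLift (A ⊞ A) := by
      repeat' apply biprod.hom_ext
      all_goals simp [vertLift]
    rw [harg]
  rw [h1, ← Category.assoc, h2, Functor.map_comp]
  simp only [Category.assoc]
  have h3 : l.lam ((A ⊞ A) ⊞ (A ⊞ A)) ≫ biprod.snd ≫ l.lam (A ⊞ A) ≫ biprod.snd =
      l.lam ((A ⊞ A) ⊞ (A ⊞ A)) ≫ biprod.map (l.lam (A ⊞ A)) (l.lam (A ⊞ A)) ≫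
        biprod.snd ≫ biprod.snd := by
    simp
  rw [h3, ← reassoc_of% (l.vlift (A ⊞ A))]
  simp [vertLift, partialOf_eq]

end Ax5

section Ax6

variable (S : Monad C) (l : BDistLaw S)

lemma partial_dc6 (A : C) :
    partialOf S l A ≫ partialOf S l (A ⊞ A) ≫ S.map (canFlip A) =
      partialOf S l A ≫ partialOf S l (A ⊞ A) := by
  have hdd : partialOf S l A ≫ partialOf S l (A ⊞ A) =
      S.map (biprod.lift (biprod.lift (𝟙 A) 0 ≫ iotaOf (A ⊞ A))
          (biprod.lift 0 (𝟙 A) ≫ iotaOf (A ⊞ A))) ≫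
        l.lam (((A ⊞ A) ⊞ (A ⊞ A)) ⊞ ((A ⊞ A) ⊞ (A ⊞ A))) ≫ biprod.snd ≫
        l.lam ((A ⊞ A) ⊞ (A ⊞ A)) ≫ biprod.snd := by
    conv_lhs => rw [partialOf_eq S l (A ⊞ A)]
    rw [← Category.assoc, dpost]
    simp only [Category.assoc]
  have hw : biprod.lift (biprod.lift (𝟙 A) 0 ≫ iotaOf (A ⊞ A))
          (biprod.lift 0 (𝟙 A) ≫ iotaOf (A ⊞ A)) ≫
        biprod.map (biprod.map (canFlip A) (canFlip A))
          (biprod.map (canFlip A) (canFlip A)) =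
      biprod.lift (biprod.lift (𝟙 A) 0 ≫ iotaOf (A ⊞ A))
          (biprod.lift 0 (𝟙 A) ≫ iotaOf (A ⊞ A)) ≫ canFlip ((A ⊞ A) ⊞ (A ⊞ A)) := by
    repeat' apply biprod.hom_ext
    all_goals simp [canFlip]
  have hM : l.lam (((A ⊞ A) ⊞ (A ⊞ A)) ⊞ ((A ⊞ A) ⊞ (A ⊞ A))) ≫ biprod.snd ≫
        l.lam ((A ⊞ A) ⊞ (A ⊞ A)) ≫ biprod.snd =
      l.lam (((A ⊞ A) ⊞ (A ⊞ A)) ⊞ ((A ⊞ A) ⊞ (A ⊞ A))) ≫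
        biprod.map (l.lam ((A ⊞ A) ⊞ (A ⊞ A))) (l.lam ((A ⊞ A) ⊞ (A ⊞ A))) ≫
        biprod.snd ≫ biprod.snd := by
    simp
  have hcf : S.map (canFlip ((A ⊞ A) ⊞ (A ⊞ A))) ≫
        l.lam (((A ⊞ A) ⊞ (A ⊞ A)) ⊞ ((A ⊞ A) ⊞ (A ⊞ A))) ≫
        biprod.map (l.lam ((A ⊞ A) ⊞ (A ⊞ A))) (l.lam ((A ⊞ A) ⊞ (A ⊞ A))) ≫
        biprod.snd ≫ biprod.snd =
      l.lam (((A ⊞ A) ⊞ (A ⊞ A)) ⊞ ((A ⊞ A) ⊞ (A ⊞ A))) ≫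
        biprod.map (l.lam ((A ⊞ A) ⊞ (A ⊞ A))) (l.lam ((A ⊞ A) ⊞ (A ⊞ A))) ≫
        biprod.snd ≫ biprod.snd := by
    rw [← reassoc_of% (l.cflip ((A ⊞ A) ⊞ (A ⊞ A)))]
    simp [canFlip]
  rw [reassoc_of% hdd, hdd]
  rw [lam_snd_natural S l (canFlip A)]
  rw [reassoc_of% (lam_snd_natural S l (biprod.map (canFlip A) (canFlip A)))]
  rw [← Functor.map_comp_assoc, hw, Functor.map_comp_assoc]
  rw [hM, hcf]

end Ax6

/-- The natural transformation `∂` obtained from a `𝔹`-distributive law is a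
differential combinator transformation. -/
theorem partialOf_isDiffCombTrans (S : Monad C) (l : BDistLaw S) :
    ∃ p : DiffCombTrans S, ∀ A : C, p.d A = partialOf S l A := by
  refine ⟨{ d := partialOf S l
            natural := fun f => partial_natural S l f
            dc1 := partial_dc1 S l
            dc2 := partial_dc2 S l
            dc3 := partial_dc3 S l
            dc4 := partial_dc4 S l
            dc5 := partial_dc5 S l
            dc6 := fun A => partial_dc6 S l A }, fun A => rfl⟩
end

section
/- Let (S, μ, η) be a monad on C equipped with a differential combinator transformation ∂. Let (A, α) be an S-algebra (α : S(A) → A with α∘η_A = 1_A and α∘μ_A = α∘S(α)), and let β := ⟨α∘S(π₁), α∘S(π₁+π₄)∘∂_{A×A}⟩ : S(A×A) → A×A be the tangent-bundle S-algebra structure on A×A. Call a morphism D : A → A an S-derivation on (A, α) if D∘α = α∘S(π₁ + D∘π₂)∘∂_A. Then the assignments v ↦ π₂∘v and D ↦ ⟨1_A, D⟩ are mutually inverse bijections between (a) morphisms v : A → A×A with π₁∘v = 1_A and v∘α = β∘S(v) (i.e. vector fields on (A, α), sections of the projection that are S-algebra morphisms), and (b) S-derivations D on (A, α). -/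
/-!
By naturality of `∂`, for a section `v` of `π₁` the second component of `β ∘ S(v)` is
`α ∘ S(π₁+π₄) ∘ S(v × v) ∘ ∂_A = α ∘ S(π₁ + π₂ ∘ v ∘ π₂) ∘ ∂_A`,
while its first component is `α`.
So `v` is an `S`-algebra morphism exactly when `π₂ ∘ v` satisfies the derivation identity, and
a section is determined by its second component.
-/

open CategoryTheory CategoryTheory.Limits

universe v u

variable {C : Type u} [Category.{v} C] [Preadditive C] [HasBinaryBiproducts C]

namespace DiffCombTrans

variable {S : Monad C} (p : DiffCombTrans S)

theorem map_comp_d_comp_map_fst_fst_add_snd_snd {A B : C} (v : A ⟶ B ⊞ B) :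
    S.map v ≫ p.d (B ⊞ B) ≫ S.map (biprod.fst ≫ biprod.fst + biprod.snd ≫ biprod.snd) =
      p.d A ≫ S.map (biprod.fst ≫ v ≫ biprod.fst + biprod.snd ≫ v ≫ biprod.snd) := by
  rw [← Category.assoc, p.natural, Category.assoc, ← S.map_comp]
  simp only [Preadditive.comp_add, biprod.map_fst_assoc, biprod.map_snd_assoc]

theorem map_section_comp_d_comp_map_fst_fst_add_snd_snd {A : C} (v : A ⟶ A ⊞ A)
    (hv : v ≫ biprod.fst = 𝟙 A) :
    S.map v ≫ p.d (A ⊞ A) ≫ S.map (biprod.fst ≫ biprod.fst + biprod.snd ≫ biprod.snd) =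
      p.d A ≫ S.map (biprod.fst + biprod.snd ≫ v ≫ biprod.snd) := by
  rw [map_comp_d_comp_map_fst_fst_add_snd_snd, hv, Category.comp_id]

theorem map_section_comp_tangentStructure {A : C} (α : S.obj A ⟶ A) (v : A ⟶ A ⊞ A)
    (hv : v ≫ biprod.fst = 𝟙 A) :
    S.map v ≫ biprod.lift (S.map biprod.fst ≫ α)
        (p.d (A ⊞ A) ≫ S.map (biprod.fst ≫ biprod.fst + biprod.snd ≫ biprod.snd) ≫ α) =
      biprod.lift α (p.d A ≫ S.map (biprod.fst + biprod.snd ≫ v ≫ biprod.snd) ≫ α) := by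
  apply biprod.hom_ext
  · rw [Category.assoc, biprod.lift_fst, biprod.lift_fst, ← Category.assoc, ← S.map_comp, hv,
      S.map_id, Category.id_comp]
  · rw [Category.assoc, biprod.lift_snd, biprod.lift_snd]
    simpa only [Category.assoc] using p.map_section_comp_d_comp_map_fst_fst_add_snd_snd v hv =≫ α

end DiffCombTrans

theorem biprod.lift_id_comp_snd_of_comp_fst {A B : C} {v : A ⟶ A ⊞ B}
    (hv : v ≫ biprod.fst = 𝟙 A) : biprod.lift (𝟙 A) (v ≫ biprod.snd) = v := by
  apply biprod.hom_ext <;> simp [hv]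

theorem vectorField_equiv_derivation_general (S : Monad C) (p : DiffCombTrans S)
    (A : C) (α : S.obj A ⟶ A) :
    -- the tangent-bundle `S`-algebra structure on `A × A`
    let β : S.obj (A ⊞ A) ⟶ A ⊞ A :=
      biprod.lift (S.map biprod.fst ≫ α)
        (p.d (A ⊞ A) ≫ S.map (biprod.fst ≫ biprod.fst + biprod.snd ≫ biprod.snd) ≫ α)
    -- (a) → (b), and `D ↦ ⟨1_A, D⟩` is a left inverse of `v ↦ π₂ ∘ v`
    (∀ v : A ⟶ A ⊞ A, v ≫ biprod.fst = 𝟙 A → α ≫ v = S.map v ≫ β →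
      (α ≫ (v ≫ biprod.snd) =
          p.d A ≫ S.map (biprod.fst + biprod.snd ≫ (v ≫ biprod.snd)) ≫ α) ∧
        biprod.lift (𝟙 A) (v ≫ biprod.snd) = v) ∧
    -- (b) → (a), and `v ↦ π₂ ∘ v` is a left inverse of `D ↦ ⟨1_A, D⟩`
    (∀ D : A ⟶ A, α ≫ D = p.d A ≫ S.map (biprod.fst + biprod.snd ≫ D) ≫ α →
      (biprod.lift (𝟙 A) D ≫ biprod.fst = 𝟙 A ∧
        α ≫ biprod.lift (𝟙 A) D = S.map (biprod.lift (𝟙 A) D) ≫ β) ∧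
        biprod.lift (𝟙 A) D ≫ biprod.snd = D) := by
  intro β
  have hβ : ∀ v : A ⟶ A ⊞ A, v ≫ biprod.fst = 𝟙 A →
      S.map v ≫ β =
        biprod.lift α (p.d A ≫ S.map (biprod.fst + biprod.snd ≫ v ≫ biprod.snd) ≫ α) :=
    p.map_section_comp_tangentStructure α
  refine ⟨fun v hv hmor => ⟨?_, biprod.lift_id_comp_snd_of_comp_fst hv⟩, fun D hD => ?_⟩
  · rw [← Category.assoc, hmor, hβ v hv, biprod.lift_snd]
  · have hsec : biprod.lift (𝟙 A) D ≫ biprod.fst = 𝟙 A := biprod.lift_fst _ _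
    refine ⟨⟨hsec, ?_⟩, biprod.lift_snd _ _⟩
    rw [hβ _ hsec, biprod.lift_snd, ← hD]
    apply biprod.hom_ext <;> simp

/-- Vector fields on an `S`-algebra `(A, α)` correspond bijectively to
`S`-derivations `D : A ⟶ A` on `(A, α)`, via `v ↦ π₂ ∘ v` and `D ↦ ⟨1_A, D⟩`. -/
theorem vectorField_equiv_derivation (S : Monad C) (p : DiffCombTrans S)
    (A : C) (α : S.obj A ⟶ A)
    (hα1 : S.η.app A ≫ α = 𝟙 A) (hα2 : S.μ.app A ≫ α = S.map α ≫ α) :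
    -- the tangent-bundle `S`-algebra structure on `A × A`
    let β : S.obj (A ⊞ A) ⟶ A ⊞ A :=
      biprod.lift (S.map biprod.fst ≫ α)
        (p.d (A ⊞ A) ≫ S.map (biprod.fst ≫ biprod.fst + biprod.snd ≫ biprod.snd) ≫ α)
    -- (a) → (b), and `D ↦ ⟨1_A, D⟩` is a left inverse of `v ↦ π₂ ∘ v`
    (∀ v : A ⟶ A ⊞ A, v ≫ biprod.fst = 𝟙 A → α ≫ v = S.map v ≫ β →
      (α ≫ (v ≫ biprod.snd) =
          p.d A ≫ S.map (biprod.fst + biprod.snd ≫ (v ≫ biprod.snd)) ≫ α) ∧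
        biprod.lift (𝟙 A) (v ≫ biprod.snd) = v) ∧
    -- (b) → (a), and `v ↦ π₂ ∘ v` is a left inverse of `D ↦ ⟨1_A, D⟩`
    (∀ D : A ⟶ A, α ≫ D = p.d A ≫ S.map (biprod.fst + biprod.snd ≫ D) ≫ α →
      (biprod.lift (𝟙 A) D ≫ biprod.fst = 𝟙 A ∧
        α ≫ biprod.lift (𝟙 A) D = S.map (biprod.lift (𝟙 A) D) ≫ β) ∧
        biprod.lift (𝟙 A) D ≫ biprod.snd = D) :=
  vectorField_equiv_derivation_general S p A α
end

section
/- Let C be a category, T, T° : C → C functors with an adjunction (η, ε) : T° ⊣ T, and p : T ⇒ Id_C a natural transformation; define p°_A := p_{T°(A)}∘η_A : A → T°(A). Fix n ≥ 1. Suppose given a functor Tₙ : C → C together with natural transformations q_j : Tₙ ⇒ T (1 ≤ j ≤ n) such that for every object A the cone ((Tₙ)(A); (q_j)_A) is a limiting wide pullback of n copies of p_A : T(A) → A, and a functor T°ₙ : C → C together with natural transformations q°_j : T° ⇒ T°ₙ (1 ≤ j ≤ n) such that for every A the cocone ((T°ₙ)(A); (q°_j)_A) is a colimiting wide pushout of n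 copies of p°_A : A → T°(A). Then T°ₙ is left adjoint to Tₙ; more precisely, the morphisms η(n)_A : A → Tₙ(T°ₙ(A)) uniquely determined by q_j∘η(n)_A = T(q°_j)∘η_A for all j (which exist because the maps T(q°_j)∘η_A have a common composite with p_{T°ₙ(A)}), and ε(n)_A : T°ₙ(Tₙ(A)) → A uniquely determined by ε(n)_A∘q°_j = ε_A∘T°(q_j) for all j, are the unit and counit of an adjunction (η(n), ε(n)) : T°ₙ ⊣ Tₙ. -/
/-!
Both sides of the adjunction are computed on hom-sets through the universal properties:
a map `T°ₙ(A) ⟶ B` is a family `T°(A) ⟶ B` equalized by precomposition with `p°_A`, and a map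
`A ⟶ Tₙ(B)` is a family `A ⟶ T(B)` equalized by postcomposition with `p_B`. Transposition along
`T° ⊣ T` matches the two conditions, since the transpose of `f : T°(A) ⟶ B` satisfies
`f^♭ ≫ p_B = p°_A ≫ f` by naturality of `p`.
-/

open CategoryTheory

universe v u

noncomputable section

namespace CategoryTheory.WidePullbackPushoutAdjunction

variable {C : Type u} [Category.{v} C] {J : Type*}

def homEquivOfExistsUniqueLift {L Y Z X : C} (f : Y ⟶ Z) (π : J → (L ⟶ Y))
    (hπ : ∀ i j, π i ≫ f = π j ≫ f)
    (hL : ∀ g : J → (X ⟶ Y), (∀ i j, g i ≫ f = g j ≫ f) → ∃! h : X ⟶ L, ∀ i, h ≫ π i = g i) :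
    (X ⟶ L) ≃ {g : J → (X ⟶ Y) // ∀ i j, g i ≫ f = g j ≫ f} :=
  Equiv.ofBijective
    (fun h => ⟨fun i => h ≫ π i, fun i j => by simp only [Category.assoc, hπ i j]⟩)
    ⟨fun h h' e => (hL _ (fun i j => by simp only [Category.assoc, hπ i j])).unique
        (fun i => congrFun (congrArg Subtype.val e) i) (fun _ => rfl),
      fun g => by
        obtain ⟨h, hh, -⟩ := hL g.1 g.2
        exact ⟨h, Subtype.ext (funext hh)⟩⟩

def homEquivOfExistsUniqueDesc {L Y Z X : C} (f : Z ⟶ Y) (ι : J → (Y ⟶ L))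
    (hι : ∀ i j, f ≫ ι i = f ≫ ι j)
    (hL : ∀ g : J → (Y ⟶ X), (∀ i j, f ≫ g i = f ≫ g j) → ∃! h : L ⟶ X, ∀ i, ι i ≫ h = g i) :
    (L ⟶ X) ≃ {g : J → (Y ⟶ X) // ∀ i j, f ≫ g i = f ≫ g j} :=
  Equiv.ofBijective
    (fun h => ⟨fun i => ι i ≫ h, fun i j => by simp only [← Category.assoc, hι i j]⟩)
    ⟨fun h h' e => (hL _ (fun i j => by simp only [← Category.assoc, hι i j])).unique
        (fun i => congrFun (congrArg Subtype.val e) i) (fun _ => rfl),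
      fun g => by
        obtain ⟨h, hh, -⟩ := hL g.1 g.2
        exact ⟨h, Subtype.ext (funext hh)⟩⟩

section

variable {T' T : C ⥤ C} (adj : T' ⊣ T) (p : T ⟶ 𝟭 C)

theorem adj_homEquiv_apply_comp_app {A B : C} (f : T'.obj A ⟶ B) :
    adj.homEquiv A B f ≫ p.app B = (adj.unit.app A ≫ p.app (T'.obj A)) ≫ f := by
  rw [Adjunction.homEquiv_unit, Category.assoc, Category.assoc]
  exact congrArg _ (p.naturality f)

def equalizedFamiliesEquiv (A B : C) :
    {g : J → (T'.obj A ⟶ B) //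
      ∀ i j, (adj.unit.app A ≫ p.app (T'.obj A)) ≫ g i = (adj.unit.app A ≫ p.app (T'.obj A)) ≫ g j} ≃
    {g : J → (A ⟶ T.obj B) // ∀ i j, g i ≫ p.app B = g j ≫ p.app B} :=
  Equiv.subtypeEquiv (Equiv.piCongrRight fun _ => adj.homEquiv A B) fun g => by
    simp only [Equiv.piCongrRight_apply, Pi.map_apply, adj_homEquiv_apply_comp_app]

variable {Tn : C ⥤ C} {q : J → (Tn ⟶ T)}
  (hcone : ∀ (A : C) (i j : J), (q i).app A ≫ p.app A = (q j).app A ≫ p.app A)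
  (hlim : ∀ (A X : C) (g : J → (X ⟶ T.obj A)),
    (∀ i j, g i ≫ p.app A = g j ≫ p.app A) → ∃! h : X ⟶ Tn.obj A, ∀ i, h ≫ (q i).app A = g i)
  {T'n : C ⥤ C} {q' : J → (T' ⟶ T'n)}
  (hcocone : ∀ (A : C) (i j : J),
    (adj.unit.app A ≫ p.app (T'.obj A)) ≫ (q' i).app A =
      (adj.unit.app A ≫ p.app (T'.obj A)) ≫ (q' j).app A)
  (hcolim : ∀ (A X : C) (g : J → (T'.obj A ⟶ X)),
    (∀ i j, (adj.unit.app A ≫ p.app (T'.obj A)) ≫ g i =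
      (adj.unit.app A ≫ p.app (T'.obj A)) ≫ g j) →
    ∃! h : T'n.obj A ⟶ X, ∀ i, (q' i).app A ≫ h = g i)

def homEquiv (A B : C) : (T'n.obj A ⟶ B) ≃ (A ⟶ Tn.obj B) :=
  ((homEquivOfExistsUniqueDesc _ _ (hcocone A) (hcolim A B)).trans
    (equalizedFamiliesEquiv adj p A B)).trans
    (homEquivOfExistsUniqueLift _ _ (hcone B) (hlim B A)).symm

theorem homEquiv_apply_comp_app {A B : C} (h : T'n.obj A ⟶ B) (i : J) :
    homEquiv adj p hcone hlim hcocone hcolim A B h ≫ (q i).app B =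
      adj.homEquiv A B ((q' i).app A ≫ h) :=
  congrFun (congrArg Subtype.val
    ((homEquivOfExistsUniqueLift _ _ (hcone B) (hlim B A)).apply_symm_apply _)) i

theorem app_comp_homEquiv_symm_apply {A B : C} (k : A ⟶ Tn.obj B) (i : J) :
    (q' i).app A ≫ (homEquiv adj p hcone hlim hcocone hcolim A B).symm k =
      (adj.homEquiv A B).symm (k ≫ (q i).app B) := by
  rw [Equiv.eq_symm_apply, ← homEquiv_apply_comp_app adj p hcone hlim hcocone hcolim,
    Equiv.apply_symm_apply]

def adjunction : T'n ⊣ Tn :=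
  Adjunction.mkOfHomEquiv
    { homEquiv := homEquiv adj p hcone hlim hcocone hcolim
      homEquiv_naturality_left_symm := fun {A' A B} f g =>
        (homEquivOfExistsUniqueDesc _ _ (hcocone A') (hcolim A' B)).injective <|
          Subtype.ext <| funext fun i => by
            change (q' i).app A' ≫ _ = (q' i).app A' ≫ T'n.map f ≫ _
            rw [app_comp_homEquiv_symm_apply, ← (q' i).naturality_assoc,
              app_comp_homEquiv_symm_apply, Category.assoc,
              Adjunction.homEquiv_naturality_left_symm]
      homEquiv_naturality_right := fun {A B B'} f g =>
        (homEquivOfExistsUniqueLift _ _ (hcone B') (hlim B' A)).injective <|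
          Subtype.ext <| funext fun i => by
            change _ ≫ (q i).app B' = (_ ≫ Tn.map g) ≫ (q i).app B'
            rw [Category.assoc, (q i).naturality, ← Category.assoc, homEquiv_apply_comp_app,
              homEquiv_apply_comp_app, ← Adjunction.homEquiv_naturality_right, Category.assoc] }

theorem adjunction_unit_app_comp_app (A : C) (i : J) :
    (adjunction adj p hcone hlim hcocone hcolim).unit.app A ≫ (q i).app (T'n.obj A) =
      adj.unit.app A ≫ T.map ((q' i).app A) := by
  refine (homEquiv_apply_comp_app adj p hcone hlim hcocone hcolim (𝟙 _) i).trans ?_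
  rw [Category.comp_id, Adjunction.homEquiv_unit]
  rfl

theorem app_comp_adjunction_counit_app (A : C) (i : J) :
    (q' i).app (Tn.obj A) ≫ (adjunction adj p hcone hlim hcocone hcolim).counit.app A =
      T'.map ((q i).app A) ≫ adj.counit.app A := by
  refine (app_comp_homEquiv_symm_apply adj p hcone hlim hcocone hcolim (𝟙 _) i).trans ?_
  rw [Category.id_comp, Adjunction.homEquiv_counit]
  rfl

end

end CategoryTheory.WidePullbackPushoutAdjunction

end

theorem wide_pullback_pushout_adjunction_general {C : Type u} [Category.{v} C]
    (T' T : C ⥤ C) (adj : T' ⊣ T) (p : T ⟶ 𝟭 C)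
    (n : ℕ)
    (Tn : C ⥤ C) (q : Fin n → (Tn ⟶ T))
    -- `(Tₙ(A); (q_j)_A)` is a cone over `n` copies of `p_A`
    (hcone : ∀ (A : C) (i j : Fin n), (q i).app A ≫ p.app A = (q j).app A ≫ p.app A)
    -- ... and it is a limiting one
    (hlim : ∀ (A X : C) (g : Fin n → (X ⟶ T.obj A)),
      (∀ i j, g i ≫ p.app A = g j ≫ p.app A) →
      ∃! h : X ⟶ Tn.obj A, ∀ i, h ≫ (q i).app A = g i)
    (T'n : C ⥤ C) (q' : Fin n → (T' ⟶ T'n))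
    -- `(T°ₙ(A); (q°_j)_A)` is a cocone under `n` copies of `p°_A`
    (hcocone : ∀ (A : C) (i j : Fin n),
      (adj.unit.app A ≫ p.app (T'.obj A)) ≫ (q' i).app A =
        (adj.unit.app A ≫ p.app (T'.obj A)) ≫ (q' j).app A)
    -- ... and it is a colimiting one
    (hcolim : ∀ (A X : C) (g : Fin n → (T'.obj A ⟶ X)),
      (∀ i j, (adj.unit.app A ≫ p.app (T'.obj A)) ≫ g i =
        (adj.unit.app A ≫ p.app (T'.obj A)) ≫ g j) →
      ∃! h : T'n.obj A ⟶ X, ∀ i, (q' i).app A ≫ h = g i) :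
    ∃ adjn : T'n ⊣ Tn,
      (∀ (A : C) (i : Fin n),
        adjn.unit.app A ≫ (q i).app (T'n.obj A) = adj.unit.app A ≫ T.map ((q' i).app A)) ∧
      (∀ (A : C) (i : Fin n),
        (q' i).app (Tn.obj A) ≫ adjn.counit.app A =
          T'.map ((q i).app A) ≫ adj.counit.app A) := by
  open WidePullbackPushoutAdjunction in
  exact ⟨adjunction adj p hcone hlim hcocone hcolim,
    adjunction_unit_app_comp_app adj p hcone hlim hcocone hcolim,
    app_comp_adjunction_counit_app adj p hcone hlim hcocone hcolim⟩

/-- Frankland's lemma: if `T° ⊣ T`, `Tₙ(A)` is the wide pullback of `n` copies of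
`p_A : T(A) ⟶ A`, and `T°ₙ(A)` is the wide pushout of `n` copies of
`p°_A := p_{T°(A)} ∘ η_A : A ⟶ T°(A)`, then `T°ₙ ⊣ Tₙ`, with unit determined by
`q_j ∘ η(n)_A = T(q°_j) ∘ η_A` and counit determined by `ε(n)_A ∘ q°_j = ε_A ∘ T°(q_j)`. -/
theorem wide_pullback_pushout_adjunction {C : Type u} [Category.{v} C]
    (T' T : C ⥤ C) (adj : T' ⊣ T) (p : T ⟶ 𝟭 C)
    (n : ℕ) (hn : 1 ≤ n)
    (Tn : C ⥤ C) (q : Fin n → (Tn ⟶ T))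
    -- `(Tₙ(A); (q_j)_A)` is a cone over `n` copies of `p_A`
    (hcone : ∀ (A : C) (i j : Fin n), (q i).app A ≫ p.app A = (q j).app A ≫ p.app A)
    -- ... and it is a limiting one
    (hlim : ∀ (A X : C) (g : Fin n → (X ⟶ T.obj A)),
      (∀ i j, g i ≫ p.app A = g j ≫ p.app A) →
      ∃! h : X ⟶ Tn.obj A, ∀ i, h ≫ (q i).app A = g i)
    (T'n : C ⥤ C) (q' : Fin n → (T' ⟶ T'n))
    -- `(T°ₙ(A); (q°_j)_A)` is a cocone under `n` copies of `p°_A`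
    (hcocone : ∀ (A : C) (i j : Fin n),
      (adj.unit.app A ≫ p.app (T'.obj A)) ≫ (q' i).app A =
        (adj.unit.app A ≫ p.app (T'.obj A)) ≫ (q' j).app A)
    -- ... and it is a colimiting one
    (hcolim : ∀ (A X : C) (g : Fin n → (T'.obj A ⟶ X)),
      (∀ i j, (adj.unit.app A ≫ p.app (T'.obj A)) ≫ g i =
        (adj.unit.app A ≫ p.app (T'.obj A)) ≫ g j) →
      ∃! h : T'n.obj A ⟶ X, ∀ i, (q' i).app A ≫ h = g i) :
    ∃ adjn : T'n ⊣ Tn,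
      (∀ (A : C) (i : Fin n),
        adjn.unit.app A ≫ (q i).app (T'n.obj A) = adj.unit.app A ≫ T.map ((q' i).app A)) ∧
      (∀ (A : C) (i : Fin n),
        (q' i).app (Tn.obj A) ≫ adjn.counit.app A =
          T'.map ((q i).app A) ≫ adj.counit.app A) :=
  wide_pullback_pushout_adjunction_general T' T adj p n Tn q hcone hlim T'n q' hcocone hcolim
end

section
/- Let R be a commutative ring and let A and B be commutative R-algebras. There is a bijection between the set of R-algebra homomorphisms Sym_A(Ω_{A/R}) → B and the set of R-algebra homomorphisms A → B[ε]: an R-algebra homomorphism g : Sym_A(Ω_{A/R}) → B corresponds to the map a ↦ (g(a), g(d a)) (where a also denotes its image under the structure map A → Sym_A(Ω_{A/R}) and d a the image of the universal derivation of a under the canonical inclusion Ω_{A/R} → Sym_A(Ω_{A/R})), this map is indeed an R-algebra homomorphism A → B[ε], and every R-algebra homomorphism A → B[ε] arises in this way from a unique g. -/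
universe u

open TrivSqZeroExt

/-- The forward map: from an `R`-algebra hom `g : S → B` we get `a ↦ (g a, g (d a))`. -/
noncomputable def fwdAux {R A B : Type u} [CommRing R] [CommRing A] [CommRing B]
    [Algebra R A] [Algebra R B]
    (S : Type u) [CommRing S] [Algebra A S] [Algebra R S] [IsScalarTower R A S]
    (κ : Ω[A⁄R] →ₗ[A] S) (g : S →ₐ[R] B) : A →ₐ[R] DualNumber B where
  toFun a := inl (g (algebraMap A S a)) + inr (g (κ (KaehlerDifferential.D R A a)))
  map_one' := by
    apply TrivSqZeroExt.ext <;> simp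
  map_mul' a b := by
    apply TrivSqZeroExt.ext
    · simp [mul_comm]
    · simp only [snd_add, snd_inl, snd_inr, zero_add, snd_mul, fst_add, fst_inl, fst_inr,
        add_zero, Derivation.leibniz, map_add, map_smul, Algebra.smul_def, map_mul,
        smul_eq_mul, op_smul_eq_mul, Algebra.algebraMap_self, RingHom.id_apply]
      ring
  map_zero' := by
    apply TrivSqZeroExt.ext <;> simp
  map_add' a b := by
    apply TrivSqZeroExt.ext <;> simp
  commutes' r := by
    apply TrivSqZeroExt.ext
    · simp [← IsScalarTower.algebraMap_apply, TrivSqZeroExt.algebraMap_eq_inl']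
    · simp [TrivSqZeroExt.algebraMap_eq_inl']

/-- For a commutative `R`-algebra `A` with symmetric algebra `S = Sym_A(Ω_{A/R})` of its
module of Kähler differentials (given by its universal property: `S` is a commutative
`A`-algebra with an `A`-linear map `κ : Ω_{A/R} →ₗ[A] S`, universal among such), and any
commutative `R`-algebra `B`, there is a bijection between `R`-algebra homomorphisms
`S → B` and `R`-algebra homomorphisms `A → B[ε]`, sending `g` to `a ↦ (g a, g (d a))`. -/
theorem symAlg_kaehler_hom_equiv_dualNumber_hom
    {R A B : Type u} [CommRing R] [CommRing A] [CommRing B]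
    [Algebra R A] [Algebra R B]
    (S : Type u) [CommRing S] [Algebra A S] [Algebra R S] [IsScalarTower R A S]
    (κ : Ω[A⁄R] →ₗ[A] S)
    (huniv : ∀ (C : Type u) [CommRing C] [Algebra A C] (f : Ω[A⁄R] →ₗ[A] C),
      ∃! g : S →ₐ[A] C, ∀ m : Ω[A⁄R], g (κ m) = f m) :
    ∃ e : (S →ₐ[R] B) ≃ (A →ₐ[R] DualNumber B),
      ∀ (g : S →ₐ[R] B) (a : A),
        (e g a).fst = g (algebraMap A S a) ∧
        (e g a).snd = g (κ (KaehlerDifferential.D R A a)) := by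
  classical
  refine ⟨Equiv.ofBijective (fwdAux S κ) ⟨?_, ?_⟩, fun g a => ⟨by show (fwdAux S κ g a).fst = _; simp [fwdAux], by show (fwdAux S κ g a).snd = _; simp [fwdAux]⟩⟩
  · -- injectivity
    intro g₁ g₂ h
    letI : Algebra A B := (g₁.toRingHom.comp (algebraMap A S)).toAlgebra
    haveI : IsScalarTower R A B := IsScalarTower.of_algebraMap_eq' (by
      ext r
      simp [RingHom.algebraMap_toAlgebra, ← IsScalarTower.algebraMap_apply])
    have hfst : ∀ a : A, g₁ (algebraMap A S a) = g₂ (algebraMap A S a) := fun a => by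
      have := congrArg TrivSqZeroExt.fst (DFunLike.congr_fun h a)
      simpa [fwdAux] using this
    have hsnd : ∀ a : A,
        g₁ (κ (KaehlerDifferential.D R A a)) = g₂ (κ (KaehlerDifferential.D R A a)) := fun a => by
      have := congrArg TrivSqZeroExt.snd (DFunLike.congr_fun h a)
      simpa [fwdAux] using this
    -- promote to A-algebra homs
    let G₁ : S →ₐ[A] B := { g₁ with commutes' := fun a => rfl }
    let G₂ : S →ₐ[A] B := { g₂ with commutes' := fun a => (hfst a).symm }
    have hcomp : (G₁.toLinearMap.comp κ) = (G₂.toLinearMap.comp κ) := by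
      apply Derivation.liftKaehlerDifferential_unique
      ext a
      exact hsnd a
    obtain ⟨G, hG, hGuniq⟩ := huniv B (G₁.toLinearMap.comp κ)
    have h₁ : G₁ = G := hGuniq G₁ (fun m => rfl)
    have h₂ : G₂ = G := hGuniq G₂ (fun m => (DFunLike.congr_fun hcomp m).symm)
    have : G₁ = G₂ := h₁.trans h₂.symm
    ext s
    exact DFunLike.congr_fun (congrArg (fun (G : S →ₐ[A] B) => G.toRingHom) this) s
  · -- surjectivity
    intro φ
    letI : Algebra A B := ((TrivSqZeroExt.fstHom R B B).comp φ).toRingHom.toAlgebra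
    haveI : IsScalarTower R A B := IsScalarTower.of_algebraMap_eq' (by
      ext r
      simp [RingHom.algebraMap_toAlgebra, ← IsScalarTower.algebraMap_apply])
    let der : Derivation R A B :=
      { toFun := fun a => (φ a).snd
        map_add' := fun a b => by simp
        map_smul' := fun r a => by simp
        map_one_eq_zero' := by simp
        leibniz' := fun a b => by
          have hmul : φ (a * b) = φ a * φ b := map_mul φ a b
          show (φ (a * b)).snd = a • (φ b).snd + b • (φ a).snd
          rw [hmul, snd_mul]
          simp only [Algebra.smul_def, RingHom.algebraMap_toAlgebra, smul_eq_mul,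
            op_smul_eq_mul, RingHom.coe_comp, Function.comp_apply, AlgHom.toRingHom_eq_coe,
            RingHom.coe_coe, AlgHom.coe_comp, TrivSqZeroExt.fstHom_apply, RingHom.coe_mk,
            MonoidHom.coe_mk, OneHom.coe_mk, RingHom.id_apply]
          ring }
    obtain ⟨G, hG, -⟩ := huniv B der.liftKaehlerDifferential
    refine ⟨G.restrictScalars R, ?_⟩
    ext a
    · have := G.commutes a
      simp only [fwdAux, RingHom.algebraMap_toAlgebra] at this ⊢
      simpa using this
    · have := hG (KaehlerDifferential.D R A a)
      rw [Derivation.liftKaehlerDifferential_comp_D] at this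
      simp only [fwdAux]
      simpa using (show G (κ (KaehlerDifferential.D R A a)) = (φ a).snd from this)
end
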